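/- Let $G \subset \mathbb{R}^d$ be open and bounded and let $R_0 \equiv 1, R_1,\dots,R_L \in L^\infty(G)$ be linearly independent. Suppose the prior density $\pi \in L^2(G)$ satisfies $\pi \geq c$ a.e.~on $G$ for some constant $c > 0$. Then there exists $\delta = \delta(L, G, \mathbf{R}) > 0$ such that for every target moment vector $\mathbf{m} \in \mathbb{R}^L$ with $\|\mathbf{m} - \mathrm{res}_L\pi\| < \delta$, the $L^2$-norm matching $\varphi_2(\mathbf{m},\pi) = \pi + \sum_{l=0}^L \lambda_l R_l$ (with $\boldsymbol{\lambda} = H_L^{-1}(0, \mathbf{m} - \mathrm{res}_L\pi)$) is nonnegative a.e.~on $G$. -/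

import Mathlib

/-!
The matched density differs from `π` by `∑ λ_l R_l`, and `λ = H_L⁻¹ (0, m - res_L π)` depends
linearly on `m - res_L π`. Since the `R_l` are bounded on `G`, the perturbation is bounded
pointwise on `G` by `‖H_L⁻¹‖ (∑_l ‖R_l‖_∞) ‖m - res_L π‖`, which is at most `c ≤ π` once
`‖m - res_L π‖` is small enough.
-/

open MeasureTheory

attribute [local instance] Matrix.linftyOpSeminormedAddCommGroup

lemma norm_fin_cons_zero_le {n : ℕ} (v : EuclideanSpace ℝ (Fin n)) :
    ‖(Fin.cons 0 fun l => v l : Fin (n + 1) → ℝ)‖ ≤ ‖v‖ := by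
  refine (pi_norm_le_iff_of_nonneg (norm_nonneg v)).2 fun j => ?_
  cases j using Fin.cases with
  | zero => simp
  | succ l => simpa using PiLp.norm_apply_le v l

lemma abs_sum_mul_le_norm_mul_sum {ι : Type*} [Fintype ι] (a b C : ι → ℝ)
    (hb : ∀ i, |b i| ≤ C i) : |∑ i, a i * b i| ≤ ‖a‖ * ∑ i, C i :=
  calc |∑ i, a i * b i| ≤ ∑ i, |a i * b i| := Finset.abs_sum_le_sum_abs _ _
    _ ≤ ∑ i, ‖a‖ * C i := Finset.sum_le_sum fun i _ => by
        rw [abs_mul, ← Real.norm_eq_abs]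
        exact mul_le_mul (norm_le_pi_norm a i) (hb i) (abs_nonneg _) (norm_nonneg a)
    _ = ‖a‖ * ∑ i, C i := (Finset.mul_sum _ _ _).symm

lemma mul_le_of_lt_div_add_one {K t c : ℝ} (hK : 0 ≤ K) (ht : 0 ≤ t) (h : t < c / (K + 1)) :
    K * t ≤ c := by
  rw [lt_div_iff₀ (by positivity)] at h
  nlinarith

theorem l2_matching_positivity_general
    {d L : ℕ} (G : Set (EuclideanSpace ℝ (Fin d)))
    (hG_open : IsOpen G)
    (R : Fin (L + 1) → EuclideanSpace ℝ (Fin d) → ℝ)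
    (hR_bdd : ∀ l, ∃ C : ℝ, ∀ x ∈ G, |R l x| ≤ C)   -- `R_l ∈ L^∞(G)`
    (HL : Matrix (Fin (L + 1)) (Fin (L + 1)) ℝ)
    (π : EuclideanSpace ℝ (Fin d) → ℝ)
    (c : ℝ) (hc : 0 < c) (hπc : ∀ᵐ x ∂volume.restrict G, c ≤ π x)
    (resπ : EuclideanSpace ℝ (Fin L)) :
    ∃ δ > (0 : ℝ), ∀ m : EuclideanSpace ℝ (Fin L), ‖m - resπ‖ < δ →
      ∀ lam : Fin (L + 1) → ℝ,
        lam = HL⁻¹.mulVec (Fin.cons 0 fun l : Fin L => m l - resπ l) →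
        ∀ᵐ x ∂volume.restrict G, 0 ≤ π x + ∑ l, lam l * R l x := by
  choose C hC using hR_bdd
  set K := ‖HL⁻¹‖ * ∑ l, |C l|
  have hK : 0 ≤ K := by positivity
  refine ⟨c / (K + 1), by positivity, fun m hm lam hlam => ?_⟩
  have hlam : ‖lam‖ ≤ ‖HL⁻¹‖ * ‖m - resπ‖ := by
    subst hlam
    refine (Matrix.linfty_opNorm_mulVec _ _).trans (mul_le_mul_of_nonneg_left ?_ (norm_nonneg _))
    simpa only [PiLp.sub_apply] using norm_fin_cons_zero_le (m - resπ)
  have hsmall : K * ‖m - resπ‖ ≤ c := mul_le_of_lt_div_add_one hK (norm_nonneg _) hm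
  filter_upwards [hπc, ae_restrict_mem hG_open.measurableSet] with x hπx hx
  have hpert : |∑ l, lam l * R l x| ≤ ‖lam‖ * ∑ l, |C l| :=
    abs_sum_mul_le_norm_mul_sum lam (R · x) _ fun l => (hC l x hx).trans (le_abs_self _)
  have hpert_small : ‖lam‖ * ∑ l, |C l| ≤ K * ‖m - resπ‖ := by
    calc ‖lam‖ * ∑ l, |C l| ≤ ‖HL⁻¹‖ * ‖m - resπ‖ * ∑ l, |C l| := by gcongr
      _ = K * ‖m - resπ‖ := by ring
  linarith [neg_abs_le (∑ l, lam l * R l x)]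

/-- Positivity of the `L²`-norm matching: if the prior density `π ≥ c > 0` a.e.\ on
the open bounded set `G`, then there is `δ > 0` such that for every moment vector
`m` with `‖m - res_L π‖ < δ`, the matched density
`φ₂(m,π) = π + ∑ λ_l R_l`, `λ = H_L⁻¹ (0, m - res_L π)`, is nonnegative a.e. on `G`. -/
theorem l2_matching_positivity
    {d L : ℕ} (G : Set (EuclideanSpace ℝ (Fin d)))
    (hG_open : IsOpen G) (hG_bdd : Bornology.IsBounded G)
    (R : Fin (L + 1) → EuclideanSpace ℝ (Fin d) → ℝ)
    (hR_meas : ∀ l, Measurable (R l))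
    (hR_bdd : ∀ l, ∃ C : ℝ, ∀ x ∈ G, |R l x| ≤ C)   -- `R_l ∈ L^∞(G)`
    (hR0 : ∀ x ∈ G, R 0 x = 1)
    (hR_indep : ∀ a : Fin (L + 1) → ℝ,
      (∀ᵐ x ∂volume.restrict G, ∑ l, a l * R l x = 0) → a = 0)
    (HL : Matrix (Fin (L + 1)) (Fin (L + 1)) ℝ)
    (hHL : ∀ k l, HL k l = ∫ x in G, R k x * R l x)
    (π : EuclideanSpace ℝ (Fin d) → ℝ)
    (hπ_mem : MemLp π 2 (volume.restrict G))
    (c : ℝ) (hc : 0 < c) (hπc : ∀ᵐ x ∂volume.restrict G, c ≤ π x)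
    (resπ : EuclideanSpace ℝ (Fin L))
    (hresπ : ∀ l : Fin L, resπ l = ∫ x in G, R l.succ x * π x) :
    ∃ δ > (0 : ℝ), ∀ m : EuclideanSpace ℝ (Fin L), ‖m - resπ‖ < δ →
      ∀ lam : Fin (L + 1) → ℝ,
        lam = HL⁻¹.mulVec (Fin.cons 0 fun l : Fin L => m l - resπ l) →
        ∀ᵐ x ∂volume.restrict G, 0 ≤ π x + ∑ l, lam l * R l x :=
  l2_matching_positivity_general G hG_open R hR_bdd HL π c hc hπc resπ
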